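/- arXiv:1709.05102 — 2 statements merged into one kernel-verified Lean document; each statement's English description precedes it below -/
import Mathlib

section
/- Every continuous group homomorphism χ from the additive topological group (ℝ^ℕ, +) to the circle group U(1) is of the form χ = χ_λ for a unique finitely supported sequence λ ∈ ℝ^(ℕ), where χ_λ((x_j)_{j∈ℕ}) = exp(i Σ_{j∈ℕ} λ_j x_j). Hence λ ↦ χ_λ is a bijection from ℝ^(ℕ) onto the set of continuous characters of ℝ^ℕ. -/
/-! Lift the character through the covering map `Circle.exp : ℝ → U(1)`, which is possible since
`ℝ^ℕ` is contractible. Uniqueness of lifts makes the lift additive, and a continuous additive map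
on a real vector space is linear. A continuous linear functional on `𝕜^ι` is bounded on some basic
neighbourhood of `0`, hence vanishes on the subspace of vectors supported off a finite set `I`, so
it only sees the coordinates in `I`. Uniqueness of lifts, along each coordinate axis, also shows
that `χ_l` determines `l`. -/

open scoped BigOperators

/-- For a finitely supported sequence `l ∈ ℝ^(ℕ)`, the character
`χ_l : ℝ^ℕ → U(1)`, `x ↦ exp(i ∑ j, l j * x j)`. -/
noncomputable def charOfFinsupp (l : ℕ →₀ ℝ) (x : ℕ → ℝ) : Circle :=
  Circle.exp (l.sum fun j a => a * x j)

theorem AddChar.exists_continuous_lift_circleExp {E : Type*} [AddMonoid E] [TopologicalSpace E]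
    [ContinuousAdd E] [SimplyConnectedSpace E] [LocallyPathConnectedSpace E]
    (ψ : AddChar E Circle) (hψ : Continuous ψ) :
    ∃ g : E →+ ℝ, Continuous g ∧ ∀ x, ψ x = Circle.exp (g x) := by
  obtain ⟨g, ⟨hg0, hgψ⟩, -⟩ :=
    Circle.isCoveringMap_exp.existsUnique_continuousMap_lifts ⟨ψ, hψ⟩ 0 0 (by simp)
  have hg_add (x y : E) : g (x + y) = g x + g y := by
    have hlift : (fun y => g (x + y) - g x) = g := by
      refine Circle.isCoveringMap_exp.eq_of_comp_eq (by fun_prop) g.continuous ?_ 0 (by simp [hg0])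
      ext1 y
      have hexp_g (z : E) : Circle.exp (g z) = ψ z := congrFun hgψ z
      simp [Circle.exp_sub, hexp_g, AddChar.map_add_eq_mul]
    linarith [congrFun hlift y]
  exact ⟨AddMonoidHom.mk' g hg_add, g.continuous, fun x => (congrFun hgψ x).symm⟩

section DualOfPi

variable {ι 𝕜 : Type*} [NontriviallyNormedField 𝕜]

theorem ContinuousLinearMap.exists_finset_apply_eq_zero (φ : (ι → 𝕜) →L[𝕜] 𝕜) :
    ∃ I : Finset ι, ∀ x : ι → 𝕜, (∀ i ∈ I, x i = 0) → φ x = 0 := by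
  have hball : φ ⁻¹' Metric.ball 0 1 ∈ nhds (0 : ι → 𝕜) :=
    φ.continuous.continuousAt.preimage_mem_nhds
      (by simpa using Metric.ball_mem_nhds (0 : 𝕜) one_pos)
  rw [nhds_pi, Filter.mem_pi'] at hball
  obtain ⟨I, t, ht, hsub⟩ := hball
  refine ⟨I, fun x hx => ?_⟩
  by_contra hφx
  obtain ⟨c, hc⟩ := NormedField.exists_lt_norm 𝕜 ‖φ x‖⁻¹
  have hcx : c • x ∈ (I : Set ι).pi t := fun i hi => by
    simpa [hx i hi] using mem_of_mem_nhds (ht i)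
  have hlt : ‖c‖ * ‖φ x‖ < 1 := by simpa [norm_smul] using hsub hcx
  have hgt : 1 < ‖c‖ * ‖φ x‖ := (inv_lt_iff_one_lt_mul₀ (norm_pos_iff.mpr hφx)).mp hc
  exact hlt.not_gt hgt

theorem ContinuousLinearMap.exists_finsupp_apply_eq_sum (φ : (ι → 𝕜) →L[𝕜] 𝕜) :
    ∃ l : ι →₀ 𝕜, ∀ x, φ x = l.sum fun j a => a * x j := by
  classical
  obtain ⟨I, hI⟩ := φ.exists_finset_apply_eq_zero
  refine ⟨Finsupp.indicator I fun i _ => φ (Pi.single i 1), fun x => ?_⟩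
  have hrest : φ (x - ∑ i ∈ I, Pi.single i (x i)) = 0 :=
    hI _ fun i hi => by simp [Finset.sum_apply, Finset.sum_pi_single, hi]
  rw [map_sub, sub_eq_zero, map_sum] at hrest
  rw [hrest, Finsupp.sum_of_support_subset _ (Finsupp.support_indicator_subset _ _) _ (by simp)]
  refine Finset.sum_congr rfl fun i hi => ?_
  rw [Finsupp.indicator_of_mem hi, mul_comm, ← smul_eq_mul, ← map_smul, ← Pi.single_smul',
    smul_eq_mul, mul_one]

end DualOfPi

theorem charOfFinsupp_single (l : ℕ →₀ ℝ) (j : ℕ) (t : ℝ) :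
    charOfFinsupp l (Pi.single j t) = Circle.exp (l j * t) := by
  rw [charOfFinsupp, Finsupp.sum_eq_single j (fun i _ hij => by simp [hij]) (by simp),
    Pi.single_eq_same]

theorem charOfFinsupp_injective : Function.Injective charOfFinsupp := by
  intro l l' h
  ext j
  have hlift : (fun t : ℝ => l j * t) = fun t => l' j * t :=
    Circle.isCoveringMap_exp.eq_of_comp_eq (by fun_prop) (by fun_prop)
      (funext fun t => by simp [← charOfFinsupp_single, h]) 0 (by simp)
  simpa using congrFun hlift 1

/-- Every continuous character `χ : ℝ^ℕ → U(1)` of the additive topological group `ℝ^ℕ`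
(with the product topology) equals `χ_l` for a unique finitely supported sequence `l`;
hence `l ↦ χ_l` is a bijection from `ℝ^(ℕ)` onto the set of continuous characters. -/
theorem char_pi_real_eq_charOfFinsupp_unique (χ : (ℕ → ℝ) → Circle)
    (hcont : Continuous χ) (hhom : ∀ x y : ℕ → ℝ, χ (x + y) = χ x * χ y) :
    ∃! l : ℕ →₀ ℝ, χ = charOfFinsupp l := by
  let ψ : AddChar (ℕ → ℝ) Circle :=
    { toFun := χ
      map_zero_eq_one' := by simpa using hhom 0 0
      map_add_eq_mul' := hhom }
  obtain ⟨g, hg, hψg⟩ := ψ.exists_continuous_lift_circleExp hcont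
  obtain ⟨l, hl⟩ := (g.toRealLinearMap hg).exists_finsupp_apply_eq_sum
  have hχl : χ = charOfFinsupp l :=
    funext fun x => (hψg x).trans (congrArg Circle.exp (hl x))
  exact ⟨l, hχl, fun l' hl' => charOfFinsupp_injective (hl'.symm.trans hχl)⟩
end

section
/- Let J be an arbitrary nonempty index set and consider the additive topological group ℝ^J with the product topology. Every continuous group homomorphism χ : ℝ^J → U(1) is of the form χ(x) = exp(i Σ_{j∈F} λ_j x_j) for some finite subset F ⊆ J and real numbers (λ_j)_{j∈F}; in particular χ factors through the projection onto finitely many coordinates. -/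
/-!
`Circle.exp : ℝ → U(1)` is a covering map and `ℝ^J` is a simply connected, locally path-connected
real topological vector space, so `χ` lifts to a continuous map `L : ℝ^J → ℝ` with
`χ = Circle.exp ∘ L`; uniqueness of lifts makes `L` additive, hence `ℝ`-linear. The preimage under
`L` of a ball is a neighbourhood of `0`, so it contains every vector vanishing on some finite
`F ⊆ J`; these vectors form a subspace on which `L` is bounded, hence zero, and therefore
`L x = ∑_{j ∈ F} L(e_j) x_j`.
-/

open Topology

theorem exists_finset_forall_eq_imp_mem_of_mem_nhds {ι : Type*} {X : ι → Type*}
    [∀ i, TopologicalSpace (X i)] {a : ∀ i, X i} {s : Set (∀ i, X i)} (hs : s ∈ 𝓝 a) :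
    ∃ I : Finset ι, ∀ x, (∀ i ∈ I, x i = a i) → x ∈ s := by
  rw [nhds_pi, Filter.mem_pi'] at hs
  obtain ⟨I, t, ht, hts⟩ := hs
  exact ⟨I, fun x hx => hts fun i hi => hx i hi ▸ mem_of_mem_nhds (ht i)⟩

namespace ContinuousLinearMap

variable {𝕜 : Type*} [NontriviallyNormedField 𝕜] {M : Type*} [NormedAddCommGroup M]
  [NormedSpace 𝕜 M] {J : Type*}

theorem exists_finset_forall_eq_zero_imp_map_eq_zero {X : J → Type*} [∀ j, AddCommGroup (X j)]
    [∀ j, Module 𝕜 (X j)] [∀ j, TopologicalSpace (X j)] (f : (∀ j, X j) →L[𝕜] M) :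
    ∃ F : Finset J, ∀ x, (∀ j ∈ F, x j = 0) → f x = 0 := by
  have hball : f ⁻¹' Metric.ball 0 1 ∈ 𝓝 0 :=
    f.continuous.continuousAt.preimage_mem_nhds (by simpa using Metric.ball_mem_nhds 0 one_pos)
  obtain ⟨F, hF⟩ := exists_finset_forall_eq_imp_mem_of_mem_nhds hball
  refine ⟨F, fun x hx => ?_⟩
  by_contra hfx
  obtain ⟨c, hc⟩ := NormedField.exists_lt_norm 𝕜 ‖f x‖⁻¹
  have hsmall : ‖f (c • x)‖ < 1 := by
    simpa using hF (c • x) fun j hj => by simp [hx j hj]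
  rw [map_smul, norm_smul] at hsmall
  have := (inv_lt_iff_one_lt_mul₀ (norm_pos_iff.mpr hfx)).mp hc
  linarith

theorem exists_finset_eq_sum_smul_single [DecidableEq J] (f : (J → 𝕜) →L[𝕜] M) :
    ∃ F : Finset J, ∀ x, f x = ∑ j ∈ F, x j • f (Pi.single j 1) := by
  obtain ⟨F, hF⟩ := f.exists_finset_forall_eq_zero_imp_map_eq_zero
  refine ⟨F, fun x => ?_⟩
  have hrest : f (x - ∑ j ∈ F, x j • Pi.single j 1) = 0 :=
    hF _ fun j hj => by simp [Finset.sum_apply, Pi.single_apply, hj]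
  rw [map_sub, sub_eq_zero] at hrest
  simp [hrest, map_sum]

end ContinuousLinearMap

namespace AddChar

variable {E : Type*} [AddCommGroup E] [Module ℝ E] [TopologicalSpace E] [ContinuousAdd E]
  [ContinuousSMul ℝ E] [SimplyConnectedSpace E] [LocallyPathConnectedSpace E]

theorem exists_continuousLinearMap_eq_circleExp (ψ : AddChar E Circle) (hψ : Continuous ψ) :
    ∃ L : E →L[ℝ] ℝ, ∀ x, ψ x = Circle.exp (L x) := by
  obtain ⟨F, ⟨-, hFψ⟩, hFunique⟩ := Circle.isCoveringMap_exp.existsUnique_continuousMap_lifts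
    ⟨ψ, hψ⟩ 0 0 (by simp)
  have hFψ' (x : E) : Circle.exp (F x) = ψ x := congr_fun hFψ x
  -- uniqueness of lifts: `x ↦ F (s + x) - F s` is another lift of `ψ` vanishing at `0`
  have hFadd (s x : E) : F (s + x) = F s + F x := by
    let G : C(E, ℝ) := ⟨fun x => F (s + x) - F s, by fun_prop⟩
    have hGF : G = F := hFunique G ⟨by simp [G], funext fun x => by
      simp [G, Circle.exp_sub, hFψ', map_add_eq_mul]⟩
    exact sub_eq_iff_eq_add'.mp congr($hGF x)
  exact ⟨(AddMonoidHom.mk' F hFadd).toRealLinearMap F.continuous, fun x => (hFψ' x).symm⟩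

end AddChar

theorem char_pi_real_factors_through_finite_general {J : Type*}
    (χ : (J → ℝ) → Circle) (hcont : Continuous χ)
    (hhom : ∀ x y : J → ℝ, χ (x + y) = χ x * χ y) :
    ∃ (F : Finset J) (l : J → ℝ),
      (∀ x : J → ℝ, χ x = Circle.exp (∑ j ∈ F, l j * x j)) ∧
      (∀ x y : J → ℝ, (∀ j ∈ F, x j = y j) → χ x = χ y) := by
  classical
  let ψ : AddChar (J → ℝ) Circle :=
    ⟨χ, mul_eq_left.mp (by rw [← hhom, add_zero] : χ 0 * χ 0 = χ 0), hhom⟩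
  obtain ⟨L, hL⟩ := ψ.exists_continuousLinearMap_eq_circleExp hcont
  obtain ⟨F, hF⟩ := L.exists_finset_eq_sum_smul_single
  have hχ (x : J → ℝ) : χ x = Circle.exp (∑ j ∈ F, L (Pi.single j 1) * x j) := by
    simp_rw [mul_comm _ (x _), ← smul_eq_mul, ← hF]
    exact hL x
  refine ⟨F, fun j => L (Pi.single j 1), hχ, fun x y hxy => ?_⟩
  rw [hχ, hχ, Finset.sum_congr rfl fun j hj => by rw [hxy j hj]]

/-- For an arbitrary nonempty index set `J`, every continuous character
`χ : ℝ^J → U(1)` of the additive topological group `ℝ^J` (product topology) has the form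
`χ(x) = exp(i ∑_{j ∈ F} λ_j x_j)` for some finite `F ⊆ J` and reals `(λ_j)`; in particular
`χ` factors through the projection onto the coordinates in `F`. -/
theorem char_pi_real_factors_through_finite {J : Type*} [Nonempty J]
    (χ : (J → ℝ) → Circle) (hcont : Continuous χ)
    (hhom : ∀ x y : J → ℝ, χ (x + y) = χ x * χ y) :
    ∃ (F : Finset J) (l : J → ℝ),
      (∀ x : J → ℝ, χ x = Circle.exp (∑ j ∈ F, l j * x j)) ∧
      (∀ x y : J → ℝ, (∀ j ∈ F, x j = y j) → χ x = χ y) :=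
  char_pi_real_factors_through_finite_general χ hcont hhom
end
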